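/- Let (V,X,d) be a continuity space. The topology generated by (V,X,d) is regular (every closed set C and point x ∉ C have disjoint open neighbourhoods) if and only if for every x ∈ X and every set C ⊆ X closed in the generated topology, ⨆_{R : X → V_≺} d(x, B_R(C)) = ⊥ implies d(x,C) = ⊥, where B_R(C) = ⋃_{c ∈ C} B_{R(c)}(c) and the supremum is taken over all functions R from X to V_≺. -/

import Mathlib

/-- `y` is well above `x` (written `y ≻ x`): for every `S` with `⨅ S ≤ x`
there is `s ∈ S` with `s ≤ y`. -/
def WellAbove {V : Type*} [CompleteLattice V] (y x : V) : Prop :=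
  ∀ S : Set V, sInf S ≤ x → ∃ s ∈ S, s ≤ y

theorem WellAbove.mono {V : Type*} [CompleteLattice V] {a b x : V}
    (h : WellAbove a x) (hab : a ≤ b) : WellAbove b x := by
  intro S hS
  obtain ⟨s, hs, hsa⟩ := h S hS
  exact ⟨s, hs, hsa.trans hab⟩

/-- A complete lattice `V` together with an addition `add` is a value quantale if it is
completely distributive (expressed via Raney's characterization `y = ⨅ {a | a ≻ y}`),
the set `{a | a ≻ ⊥}` is a filter (nonempty, upward closed, closed under binary meets),
and `add` is associative, commutative, has `⊥` as neutral element and distributes over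
arbitrary infima. -/
structure IsValueQuantale (V : Type*) [CompleteLattice V] (add : V → V → V) : Prop where
  raney : ∀ y : V, y = sInf {a | WellAbove a y}
  wellAbove_bot_nonempty : ∃ a : V, WellAbove a ⊥
  wellAbove_bot_upward : ∀ a b : V, WellAbove a ⊥ → a ≤ b → WellAbove b ⊥
  wellAbove_bot_inf : ∀ a b : V, WellAbove a ⊥ → WellAbove b ⊥ → WellAbove (a ⊓ b) ⊥
  add_assoc : ∀ a b c : V, add (add a b) c = add a (add b c)
  add_comm : ∀ a b : V, add a b = add b a
  add_bot : ∀ a : V, add a ⊥ = a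
  add_sInf : ∀ (a : V) (S : Set V), add a (sInf S) = ⨅ s ∈ S, add a s

/-- A value quantale, bundled as a class. -/
class ValueQuantale (V : Type*) extends CompleteLattice V, Add V where
  isVQ : IsValueQuantale V (· + ·)

/-- `d : X → X → V` is a `V`-space distance (w.r.t. the addition `add`). -/
structure IsVSpaceOn {V : Type*} [CompleteLattice V] (add : V → V → V)
    {X : Type*} (d : X → X → V) : Prop where
  refl : ∀ x, d x x = ⊥
  triangle : ∀ x y z, d x z ≤ add (d x y) (d y z)

/-- The open ball of radius `ε` about `x`: all `y` with `d x y ≺ ε`. -/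
def ball {V X : Type*} [CompleteLattice V] (d : X → X → V) (ε : V) (x : X) : Set X :=
  {y | WellAbove ε (d x y)}

/-- `U` is open for the topology generated by a continuity space. -/
def GenOpen {V X : Type*} [CompleteLattice V] (d : X → X → V) (U : Set X) : Prop :=
  ∀ x ∈ U, ∃ ε : V, WellAbove ε ⊥ ∧ ball d ε x ⊆ U

/-- The topology generated by a continuity space `(V, X, d)`. -/
def genTop {V X : Type*} [ValueQuantale V] (d : X → X → V) : TopologicalSpace X where
  IsOpen := GenOpen d
  isOpen_univ := fun _x _ => by
    obtain ⟨ε, hε⟩ := (ValueQuantale.isVQ (V := V)).wellAbove_bot_nonempty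
    exact ⟨ε, hε, Set.subset_univ _⟩
  isOpen_inter := fun U₁ U₂ h₁ h₂ x hx => by
    obtain ⟨ε₁, hε₁, hb₁⟩ := h₁ x hx.1
    obtain ⟨ε₂, hε₂, hb₂⟩ := h₂ x hx.2
    exact ⟨ε₁ ⊓ ε₂, (ValueQuantale.isVQ (V := V)).wellAbove_bot_inf _ _ hε₁ hε₂,
      fun y hy => ⟨hb₁ (WellAbove.mono hy inf_le_left), hb₂ (WellAbove.mono hy inf_le_right)⟩⟩
  isOpen_sUnion := fun S hS x hx => by
    obtain ⟨U, hU, hxU⟩ := hx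
    obtain ⟨ε, hε, hb⟩ := hS U hU x hxU
    exact ⟨ε, hε, hb.trans (Set.subset_sUnion_of_mem hU)⟩

/-- `Ω S`: the downward-closed families of finite subsets of `S`,
ordered by reverse inclusion. -/
abbrev Omega (S : Type*) := (LowerSet (Finset S))ᵒᵈ

/-- The underlying family of finite subsets of an element of `Ω S`. -/
def Omega.carrier {S : Type*} (A : Omega S) : Set (Finset S) :=
  ((OrderDual.ofDual A : LowerSet (Finset S)) : Set (Finset S))

/-- Construct an element of `Ω S` from a downward-closed family of finite subsets. -/
def Omega.mk {S : Type*} (A : Set (Finset S)) (h : IsLowerSet A) : Omega S :=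
  OrderDual.toDual ⟨A, h⟩

/-- Addition on `Ω S`: intersection of the families. -/
def omegaAdd {S : Type*} (A B : Omega S) : Omega S :=
  Omega.mk (Omega.carrier A ∩ Omega.carrier B)
    ((OrderDual.ofDual A : LowerSet (Finset S)).lower.inter
      (OrderDual.ofDual B : LowerSet (Finset S)).lower)

/-!
The open neighbourhoods of a set `C` are exactly the sets containing some union of balls
`B_R(C)`, and a point `x` has a ball disjoint from `B_R(C)` precisely when
`d(x, B_R(C)) ≠ ⊥`, since Raney's condition makes `⊥` the meet of `V_≺`. For closed `C`,
`x ∉ C` iff `d(x, C) ≠ ⊥`, so both sides say that `d(x, C) ≠ ⊥` forces `d(x, B_R(C)) ≠ ⊥`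
for some `R`.
-/

open Topology

section WellAbove

variable {V : Type*} [CompleteLattice V]

theorem WellAbove.anti {a x y : V} (h : WellAbove a x) (hyx : y ≤ x) : WellAbove a y :=
  fun S hS => h S (hS.trans hyx)

theorem WellAbove.le {a x : V} (h : WellAbove a x) : x ≤ a := by
  obtain ⟨s, hs, hsa⟩ := h {x} (by simp)
  rwa [Set.mem_singleton_iff.1 hs] at hsa

variable (hR : ∀ y : V, y = sInf {a | WellAbove a y})
include hR

theorem WellAbove.exists_between {a b : V} (h : WellAbove a b) :
    ∃ c, WellAbove a c ∧ WellAbove c b := by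
  have hT : sInf {c | ∃ e, WellAbove c e ∧ WellAbove e b} ≤ b := by
    refine (le_sInf fun e (he : WellAbove e b) => ?_).trans (hR b).ge
    rw [hR e]
    exact sInf_le_sInf fun c hc => ⟨e, hc, he⟩
  obtain ⟨c, ⟨e, hce, heb⟩, hca⟩ := h _ hT
  exact ⟨e, hce.mono hca, heb⟩

theorem eq_bot_of_forall_wellAbove {b : V} (h : ∀ ε, WellAbove ε ⊥ → WellAbove ε b) :
    b = ⊥ := by
  rw [hR b, hR ⊥]
  exact le_antisymm (sInf_le_sInf h) (sInf_le_sInf fun _ ha => ha.anti bot_le)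

theorem exists_mem_wellAbove_of_biInf_eq_bot {ι : Type*} {f : ι → V} {S : Set ι}
    (hf : (⨅ i ∈ S, f i) = ⊥) {ε : V} (hε : WellAbove ε ⊥) : ∃ i ∈ S, WellAbove ε (f i) := by
  obtain ⟨δ, hεδ, hδ⟩ := hε.exists_between hR
  obtain ⟨_, ⟨i, hi, rfl⟩, hiδ⟩ := hδ (f '' S) (by rw [sInf_image, hf])
  exact ⟨i, hi, hεδ.anti hiδ⟩

end WellAbove

section ValueQuantale

variable {V : Type*} [ValueQuantale V]

theorem ValueQuantale.add_le_add_left {b c : V} (h : b ≤ c) (a : V) : a + b ≤ a + c := by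
  have hpair := (ValueQuantale.isVQ (V := V)).add_sInf a {b, c}
  rw [sInf_pair, inf_eq_left.2 h] at hpair
  rw [hpair]
  exact iInf₂_le c (by simp)

theorem WellAbove.exists_add_le {ε p : V} (h : WellAbove ε p) :
    ∃ δ : V, WellAbove δ ⊥ ∧ p + δ ≤ ε := by
  have vq := ValueQuantale.isVQ (V := V)
  have hinf : sInf ((p + ·) '' {δ : V | WellAbove δ ⊥}) = p := by
    rw [sInf_image, ← vq.add_sInf, ← vq.raney ⊥, vq.add_bot]
  obtain ⟨_, ⟨δ, hδ, rfl⟩, hδε⟩ := h _ hinf.le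
  exact ⟨δ, hδ, hδε⟩

end ValueQuantale

section ContinuitySpace

variable {V X : Type*} [ValueQuantale V] (d : X → X → V)

def infDist (x : X) (S : Set X) : V := ⨅ y ∈ S, d x y

/-- `B_R(C)`, with radii `R : X → V_≺`. -/
def ballUnion (R : X → {v : V // WellAbove v ⊥}) (C : Set X) : Set X :=
  ⋃ c ∈ C, ball d (R c).1 c

theorem exists_mem_inter_of_infDist_eq_bot {S U : Set X} {x : X} (h : infDist d x S = ⊥)
    (hU : IsOpen[genTop d] U) (hx : x ∈ U) : (U ∩ S).Nonempty := by
  obtain ⟨ε, hε, hball⟩ := hU x hx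
  obtain ⟨y, hy, hxy⟩ :=
    exists_mem_wellAbove_of_biInf_eq_bot (ValueQuantale.isVQ (V := V)).raney h hε
  exact ⟨y, hball hxy, hy⟩

theorem exists_ballUnion_subset {C W : Set X} (hW : IsOpen[genTop d] W) (hCW : C ⊆ W) :
    ∃ R : X → {v : V // WellAbove v ⊥}, ballUnion d R C ⊆ W := by
  have hradius : ∀ c, ∃ ε : {v : V // WellAbove v ⊥}, c ∈ C → ball d ε.1 c ⊆ W := by
    intro c
    by_cases hc : c ∈ C
    · obtain ⟨ε, hε, hball⟩ := hW c (hCW hc)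
      exact ⟨⟨ε, hε⟩, fun _ => hball⟩
    · obtain ⟨ε, hε⟩ := (ValueQuantale.isVQ (V := V)).wellAbove_bot_nonempty
      exact ⟨⟨ε, hε⟩, fun h => absurd h hc⟩
  choose R hR using hradius
  exact ⟨R, Set.iUnion₂_subset fun c hc => hR c hc⟩

theorem ball_inter_eq_empty {ε : V} {x : X} {S : Set X} (h : ¬ WellAbove ε (infDist d x S)) :
    ball d ε x ∩ S = ∅ :=
  Set.eq_empty_of_forall_notMem fun _ ⟨hxy, hy⟩ => h (hxy.anti (biInf_le _ hy))

variable {d} (hd : IsVSpaceOn (· + · : V → V → V) d)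
include hd

theorem mem_ball_self {ε : V} (hε : WellAbove ε ⊥) (x : X) : x ∈ ball d ε x := by
  change WellAbove ε (d x x)
  rwa [hd.refl]

theorem infDist_eq_bot_of_mem {x : X} {S : Set X} (hx : x ∈ S) : infDist d x S = ⊥ :=
  le_bot_iff.1 ((biInf_le _ hx).trans (hd.refl x).le)

theorem isOpen_ball (ε : V) (x : X) : IsOpen[genTop d] (ball d ε x) := by
  intro y hy
  obtain ⟨ε', hεε', hε'⟩ := WellAbove.exists_between (ValueQuantale.isVQ (V := V)).raney hy
  obtain ⟨δ, hδ, hle⟩ := hε'.exists_add_le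
  refine ⟨δ, hδ, fun z hz => hεε'.anti ?_⟩
  calc d x z ≤ d x y + d y z := hd.triangle x y z
    _ ≤ d x y + δ := ValueQuantale.add_le_add_left hz.le _
    _ ≤ ε' := hle

theorem isOpen_ballUnion (R : X → {v : V // WellAbove v ⊥}) (C : Set X) :
    IsOpen[genTop d] (ballUnion d R C) :=
  @isOpen_biUnion X X (genTop d) _ _ fun c _ => isOpen_ball hd _ c

theorem subset_ballUnion (R : X → {v : V // WellAbove v ⊥}) (C : Set X) :
    C ⊆ ballUnion d R C :=
  fun c hc => Set.mem_biUnion hc (mem_ball_self hd (R c).2 c)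

end ContinuitySpace

/-- the topology generated by `(V,X,d)` is regular (every closed set and
point outside it have disjoint open neighbourhoods) iff for every `x` and every closed
`C`, `⨆_R d(x, B_R(C)) = ⊥` implies `d(x,C) = ⊥`, the supremum ranging over all
functions `R : X → V_≺`, where `B_R(C) = ⋃_{c ∈ C} B_{R(c)}(c)`. -/
theorem regular_iff {V X : Type*} [ValueQuantale V] (d : X → X → V)
    (hd : IsVSpaceOn (· + · : V → V → V) d) :
    (∀ (C : Set X) (x : X), @IsClosed X (genTop d) C → x ∉ C →
      ∃ U W : Set X, (genTop d).IsOpen U ∧ (genTop d).IsOpen W ∧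
        x ∈ U ∧ C ⊆ W ∧ U ∩ W = ∅) ↔
    (∀ (x : X) (C : Set X), @IsClosed X (genTop d) C →
      (⨆ R : X → {v : V // WellAbove v ⊥},
          ⨅ y ∈ ⋃ c ∈ C, ball d (R c).1 c, d x y) = ⊥ →
        (⨅ y ∈ C, d x y) = ⊥) := by
  have raney := (ValueQuantale.isVQ (V := V)).raney
  constructor
  · intro hreg x C hC hsup
    by_cases hxC : x ∈ C
    · exact infDist_eq_bot_of_mem hd hxC
    obtain ⟨U, W, hU, hW, hxU, hCW, hUW⟩ := hreg C x hC hxC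
    obtain ⟨R, hRW⟩ := exists_ballUnion_subset d hW hCW
    obtain ⟨y, hyU, hyR⟩ := exists_mem_inter_of_infDist_eq_bot d (iSup_eq_bot.1 hsup R) hU hxU
    exact (Set.eq_empty_iff_forall_notMem.1 hUW y ⟨hyU, hRW hyR⟩).elim
  · intro hcond C x hC hxC
    have hxC' : infDist d x C ≠ ⊥ := fun h => by
      obtain ⟨y, hyC', hyC⟩ := exists_mem_inter_of_infDist_eq_bot d h hC.isOpen_compl hxC
      exact hyC' hyC
    obtain ⟨R, hR⟩ := not_forall.1 (mt iSup_eq_bot.2 (mt (hcond x C hC) hxC'))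
    obtain ⟨ε, hε, hεR⟩ := not_forall₂.1 (mt (eq_bot_of_forall_wellAbove raney) hR)
    exact ⟨ball d ε x, ballUnion d R C, isOpen_ball hd ε x, isOpen_ballUnion hd R C,
      mem_ball_self hd hε x, subset_ballUnion hd R C, ball_inter_eq_empty d hεR⟩
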